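/- For an odd prime p, the state U_{F_{b^{-1}}}|0⟩ (with F_c = [[1,c],[0,1]]) is an eigenvector with eigenvalue 1 of the displacement operator D_{1,b}, for each b ∈ Z_p^*. -/
import Mathlib

open Matrix BigOperators
open scoped ComplexOrder Kronecker

noncomputable def omg (p : ℕ) : ℂ := Complex.exp (2 * Real.pi * Complex.I / p)

noncomputable def Xop (p : ℕ) [Fact p.Prime] : Matrix (ZMod p) (ZMod p) ℂ :=
  Matrix.of fun j k => if j = k + 1 then 1 else 0

noncomputable def Zop (p : ℕ) [Fact p.Prime] : Matrix (ZMod p) (ZMod p) ℂ :=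
  Matrix.of fun j k => if j = k then omg p ^ j.val else 0

noncomputable def Dop (p : ℕ) [Fact p.Prime] (x z : ZMod p) : Matrix (ZMod p) (ZMod p) ℂ :=
  (omg p ^ ((2⁻¹ * x * z : ZMod p).val)) • (Xop p ^ x.val * Zop p ^ z.val)

noncomputable def tau (p : ℕ) [Fact p.Prime] : ℂ := omg p ^ ((2⁻¹ : ZMod p)).val

/-- Metaplectic/symplectic unitary `U_F` for `F = [[α,β],[γ,ε]] ∈ SL(2,ℤ_p)`. -/
noncomputable def U (p : ℕ) [Fact p.Prime] (F : Matrix (Fin 2) (Fin 2) (ZMod p)) :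
    Matrix (ZMod p) (ZMod p) ℂ :=
  if F 0 1 = 0 then
    Matrix.of fun j k =>
      if j = F 0 0 * k then tau p ^ ((F 0 0 * F 1 0 * k ^ 2 : ZMod p)).val else 0
  else
    Matrix.of fun j k =>
      (Real.sqrt p : ℂ)⁻¹ *
        tau p ^ (((F 0 1)⁻¹ * (F 0 0 * k ^ 2 - 2 * j * k + F 1 1 * j ^ 2) : ZMod p)).val

lemma omg_pow_p (p : ℕ) (hp : p ≠ 0) : omg p ^ p = 1 := by
  rw [omg, ← Complex.exp_nat_mul]
  rw [show (p : ℂ) * (2 * Real.pi * Complex.I / p) = 2 * Real.pi * Complex.I by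
    field_simp]
  simpa [mul_comm, mul_assoc] using Complex.exp_two_pi_mul_I

lemma omg_pow_mod (p : ℕ) (hp : p ≠ 0) (n : ℕ) : omg p ^ n = omg p ^ (n % p) := by
  conv_lhs => rw [← Nat.div_add_mod n p]
  rw [pow_add, pow_mul, omg_pow_p p hp, one_pow, one_mul]

lemma omg_val_add (p : ℕ) [Fact p.Prime] (a b : ZMod p) :
    omg p ^ ((a + b).val) = omg p ^ a.val * omg p ^ b.val := by
  rw [← pow_add, ZMod.val_add, ← omg_pow_mod p (Fact.out : p.Prime).ne_zero]

lemma omg_val_mul (p : ℕ) [Fact p.Prime] (a b : ZMod p) :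
    omg p ^ ((a * b).val) = (omg p ^ a.val) ^ b.val := by
  rw [← pow_mul, ZMod.val_mul, ← omg_pow_mod p (Fact.out : p.Prime).ne_zero]

lemma Zop_pow (p : ℕ) [Fact p.Prime] (m : ℕ) :
    Zop p ^ m = Matrix.of fun j k => if j = k then omg p ^ (j.val * m) else 0 := by
  induction m with
  | zero => ext j k; simp [Matrix.one_apply]
  | succ n ih =>
    rw [pow_succ, ih]
    ext j k
    simp only [Matrix.mul_apply, Matrix.of_apply, Zop]
    rw [Finset.sum_eq_single k]
    · by_cases h : j = k
      · subst h; simp [Nat.mul_succ, pow_add]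
      · simp [h]
    · intro l _ hl; simp [hl]
    · simp

lemma tau_val (p : ℕ) [Fact p.Prime] (x : ZMod p) :
    tau p ^ x.val = omg p ^ ((2⁻¹ * x : ZMod p)).val := by
  rw [omg_val_mul, tau]

theorem stmt13 (p : ℕ) [Fact p.Prime] (hp : p ≠ 2) (b : ZMod p) (hb : b ≠ 0) :
    Dop p 1 b *ᵥ (fun j => U p !![1, b⁻¹; 0, 1] j 0) = fun j => U p !![1, b⁻¹; 0, 1] j 0 := by
  have hp1 : (1 : ℕ) < p := (Fact.out : p.Prime).one_lt
  haveI : Fact (1 < p) := ⟨hp1⟩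
  have hb' : (b⁻¹ : ZMod p) ≠ 0 := inv_ne_zero hb
  have h2 : (2 : ZMod p) ≠ 0 := by
    intro h
    have h' : ((2 : ℕ) : ZMod p) = 0 := by exact_mod_cast h
    have hdvd := (ZMod.natCast_eq_zero_iff 2 p).mp h'
    exact hp ((Nat.prime_dvd_prime_iff_eq (Fact.out : p.Prime) Nat.prime_two).mp hdvd)
  have hU : ∀ k : ZMod p, U p !![1, b⁻¹; 0, 1] k 0
      = (Real.sqrt p : ℂ)⁻¹ * tau p ^ ((b * k ^ 2 : ZMod p)).val := by
    intro k
    have hz : (b⁻¹⁻¹ * (1 * (0 : ZMod p) ^ 2 - 2 * k * 0 + 1 * k ^ 2) : ZMod p) = b * k ^ 2 := by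
      rw [inv_inv]; ring
    simp [U, hb', hz]
  have hval1 : ((1 : ZMod p)).val = 1 := ZMod.val_one p
  funext j
  rw [show (fun j => U p !![1, b⁻¹; 0, 1] j 0)
      = fun k => (Real.sqrt p : ℂ)⁻¹ * tau p ^ ((b * k ^ 2 : ZMod p)).val from funext hU, hU]
  set v : ZMod p → ℂ := fun k => (Real.sqrt p : ℂ)⁻¹ * tau p ^ ((b * k ^ 2 : ZMod p)).val with hv
  have hZv : (Zop p ^ b.val) *ᵥ v = fun k => omg p ^ (k.val * b.val) * v k := by
    funext k
    simp [Matrix.mulVec, dotProduct, Zop_pow, Finset.sum_ite_eq, ite_mul]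
  have hXw : ∀ w : ZMod p → ℂ, (Xop p) *ᵥ w = fun k => w (k - 1) := by
    intro w
    funext k
    simp only [Matrix.mulVec, dotProduct, Xop, Matrix.of_apply, ite_mul, one_mul,
      zero_mul]
    rw [Finset.sum_eq_single (k - 1)]
    · simp
    · intro l _ hl
      rw [if_neg]
      intro h; exact hl (by rw [h]; ring)
    · simp
  have step : Dop p 1 b *ᵥ v = fun k =>
      omg p ^ ((2⁻¹ * 1 * b : ZMod p)).val * (omg p ^ ((k - 1).val * b.val) * v (k - 1)) := by
    funext k
    rw [Dop, Matrix.smul_mulVec, hval1, pow_one, ← Matrix.mulVec_mulVec, hZv, hXw]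
    simp
  rw [step]
  simp only [hv]
  rw [tau_val, tau_val]
  have hm : ∀ a c : ZMod p, omg p ^ (a.val * c.val) = omg p ^ ((a * c : ZMod p)).val := by
    intro a c; rw [omg_val_mul, pow_mul]
  rw [hm]
  rw [show (Real.sqrt p : ℂ)⁻¹ * omg p ^ ((2⁻¹ * (b * (j - 1) ^ 2) : ZMod p)).val = _ from rfl]
  have key : (2⁻¹ * 1 * b + ((j - 1) * b + 2⁻¹ * (b * (j - 1) ^ 2)) : ZMod p)
      = 2⁻¹ * (b * j ^ 2) := by
    field_simp
    ring
  calc omg p ^ ((2⁻¹ * 1 * b : ZMod p)).val *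
        (omg p ^ (((j - 1) * b : ZMod p)).val *
          ((Real.sqrt p : ℂ)⁻¹ * omg p ^ ((2⁻¹ * (b * (j - 1) ^ 2) : ZMod p)).val))
      = (Real.sqrt p : ℂ)⁻¹ *
        (omg p ^ ((2⁻¹ * 1 * b : ZMod p)).val *
          (omg p ^ (((j - 1) * b : ZMod p)).val *
            omg p ^ ((2⁻¹ * (b * (j - 1) ^ 2) : ZMod p)).val)) := by ring
    _ = (Real.sqrt p : ℂ)⁻¹ * omg p ^ ((2⁻¹ * (b * j ^ 2) : ZMod p)).val := by
        rw [← omg_val_add, ← omg_val_add, key]
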